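/- Let F, f : ℝ^p × ℝ^q → ℝ be such that F is L_{F,0}-Lipschitz, ∇F is L_{F,1}-Lipschitz, f is twice differentiable with f(x, ·) σ-strongly convex for every x (σ > 0), ∇f is L_{f,1}-Lipschitz, and ∇²f is L_{f,2}-Lipschitz. Let y* : ℝ^p → ℝ^q satisfy ∇₂f(x, y*(x)) = 0 for all x, define v*(x) := [∇²₂₂f(x, y*(x))]^{-1} ∇₂F(x, y*(x)), and set r_v := L_{F,0}/σ and L_v := (L_{F,1} + L_{f,2} r_v)(1 + L_{f,1}/σ). If ‖v*(x)‖ ≤ r_v for all x, then v* is Lipschitz continuous with constant L_v/σ, i.e. ‖v*(x) − v*(x')‖ ≤ (L_v/σ)‖x − x'‖ for all x, x' ∈ ℝ^p. -/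

import Mathlib

/-!
Strong convexity makes `∇₂f(x, ·)` a strongly monotone map with constant `σ`, and then so is
its derivative, the Hessian `H(x, y)`. Strong monotonicity gives `σ ‖u - u'‖ ≤ ‖G u - G u'‖`.
Applied to `G = ∇₂f(x', ·)` at the zeros `y*(x')` and `y*(x)` of `∇₂f(x', ·)` and `∇₂f(x, ·)`,
it makes `y*` Lipschitz with constant `L_{f,1}/σ`. Applied to `G = H(x, y*(x))` and the linear
systems defining `v*(x)` and `v*(x')`, it gives
`σ ‖v*(x) - v*(x')‖ ≤ ‖Δ∇₂F‖ + ‖ΔH‖ ‖v*(x')‖ ≤ (L_{F,1} + L_{f,2} r_v) ‖(x, y*(x)) - (x', y*(x'))‖`,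
and the last distance is at most `(1 + L_{f,1}/σ) ‖x - x'‖`.
-/

noncomputable section

/-- `Vec d` is the Euclidean space `ℝ^d`. -/
abbrev Vec (d : ℕ) : Type := EuclideanSpace ℝ (Fin d)

open Set
open scoped InnerProductSpace

section StronglyMonotone

variable {E : Type*} [NormedAddCommGroup E] [InnerProductSpace ℝ E]

def IsStronglyMonotone (m : ℝ) (G : E → E) : Prop :=
  ∀ w z, m * ‖w - z‖ ^ 2 ≤ ⟪G w - G z, w - z⟫_ℝ

theorem StrongConvexOn.isStronglyMonotone [CompleteSpace E] {m : ℝ} {g : E → ℝ} {G : E → E}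
    (hg : StrongConvexOn univ m g) (hG : ∀ y, HasGradientAt g (G y) y) :
    IsStronglyMonotone m G := by
  intro y z
  set ℓ : ℝ →ᵃ[ℝ] E := AffineMap.lineMap z y
  have hderiv : ∀ t, HasDerivAt (fun t => g (ℓ t) - m / 2 * ‖ℓ t‖ ^ 2)
      (⟪G (ℓ t), y - z⟫_ℝ - m * ⟪ℓ t, y - z⟫_ℝ) t := by
    intro t
    have hℓ : HasDerivAt ℓ (y - z) t := AffineMap.hasDerivAt_lineMap
    refine (((hG (ℓ t)).hasFDerivAt.comp_hasDerivAt t hℓ).sub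
      (hℓ.norm_sq.const_mul (m / 2))).congr_deriv ?_
    rw [InnerProductSpace.toDual_apply_apply]
    ring
  have hconv : ConvexOn ℝ univ (fun t => g (ℓ t) - m / 2 * ‖ℓ t‖ ^ 2) :=
    (strongConvexOn_iff_convex.mp hg).comp_affineMap ℓ
  have hmono := hconv.monotoneOn_deriv (fun t _ => (hderiv t).differentiableAt)
    (mem_univ 0) (mem_univ 1) zero_le_one
  rw [(hderiv 0).deriv, (hderiv 1).deriv] at hmono
  simp only [ℓ, AffineMap.lineMap_apply_zero, AffineMap.lineMap_apply_one] at hmono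
  rw [inner_sub_left, ← real_inner_self_eq_norm_sq, inner_sub_left]
  linarith

lemma mul_le_of_mul_sq_le_mul {m a c : ℝ} (ha : 0 ≤ a) (hc : 0 ≤ c) (h : m * a ^ 2 ≤ c * a) :
    m * a ≤ c := by
  rcases ha.eq_or_lt with rfl | ha
  · simpa using hc
  · exact le_of_mul_le_mul_right (by nlinarith) ha

theorem IsStronglyMonotone.mul_norm_sub_le {m : ℝ} {G : E → E} (hG : IsStronglyMonotone m G)
    (w z : E) : m * ‖w - z‖ ≤ ‖G w - G z‖ :=
  mul_le_of_mul_sq_le_mul (norm_nonneg _) (norm_nonneg _)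
    ((hG w z).trans (real_inner_le_norm _ _))

theorem IsStronglyMonotone.hasFDerivAt {m : ℝ} {G : E → E} {A : E →L[ℝ] E} {y : E}
    (hG : IsStronglyMonotone m G) (hA : HasFDerivAt G A y) : IsStronglyMonotone m A := by
  suffices key : ∀ v, m * ‖v‖ ^ 2 ≤ ⟪A v, v⟫_ℝ by
    intro w z
    simpa [map_sub] using key (w - z)
  intro v
  set ψ : ℝ → ℝ := fun t => ⟪G (y + t • v), v⟫_ℝ - m * ‖v‖ ^ 2 * t
  have hψ : HasDerivAt ψ (⟪A v, v⟫_ℝ - m * ‖v‖ ^ 2) 0 := by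
    have hline : HasDerivAt (fun t : ℝ => y + t • v) v 0 := by
      simpa using ((hasDerivAt_id (0 : ℝ)).smul_const v).const_add y
    have hG' : HasFDerivAt G A (y + (0 : ℝ) • v) := by simpa using hA
    exact (((hG'.comp_hasDerivAt 0 hline).inner ℝ (hasDerivAt_const 0 v)).sub
      ((hasDerivAt_id 0).const_mul (m * ‖v‖ ^ 2))).congr_deriv (by simp)
  -- `ψ t - ψ 0 = (⟪G (y + t • v) - G y, t • v⟫ - m * ‖t • v‖ ^ 2) / t ≥ 0` for `t > 0`
  have hmin : IsLocalMinOn ψ (Ici 0) 0 := by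
    refine IsMinOn.localize fun t (ht : 0 ≤ t) => ?_
    show ψ 0 ≤ ψ t
    have h := hG (y + t • v) y
    rw [add_sub_cancel_left, norm_smul, Real.norm_of_nonneg ht, real_inner_smul_right,
      inner_sub_left] at h
    rcases ht.eq_or_lt with rfl | ht
    · rfl
    · have key : m * ‖v‖ ^ 2 * t ≤ ⟪G (y + t • v), v⟫_ℝ - ⟪G y, v⟫_ℝ :=
        le_of_mul_le_mul_left (by linarith) ht
      simp only [ψ, zero_smul, add_zero, mul_zero, sub_zero]
      linarith
  have hcone : (1 : ℝ) ∈ posTangentConeAt (Ici (0 : ℝ)) 0 :=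
    mem_posTangentConeAt_of_segment_subset (by simp [segment_eq_Icc, Icc_subset_Ici_self])
  simpa using hmin.hasFDerivWithinAt_nonneg hψ.hasFDerivAt.hasFDerivWithinAt hcone

theorem IsStronglyMonotone.mul_norm_sub_le_of_apply_eq {m : ℝ} {A A' : E →L[ℝ] E}
    {v v' b b' : E} (hA : IsStronglyMonotone m A) (hv : A v = b) (hv' : A' v' = b') :
    m * ‖v - v'‖ ≤ ‖b - b'‖ + ‖A - A'‖ * ‖v'‖ :=
  calc m * ‖v - v'‖ ≤ ‖A v - A v'‖ := hA.mul_norm_sub_le v v'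
    _ = ‖(b - b') + (A' - A) v'‖ := by
        rw [← hv, ← hv', sub_apply]; abel_nf
    _ ≤ ‖b - b'‖ + ‖A - A'‖ * ‖v'‖ := by
        refine (norm_add_le _ _).trans (add_le_add le_rfl ?_)
        rw [← norm_neg, ← neg_apply, neg_sub]
        exact (A - A').le_opNorm v'

theorem norm_sub_le_of_isStronglyMonotone_of_eq_zero {X : Type*} [SeminormedAddCommGroup X]
    {m L : ℝ} (hm : 0 < m) {G : X → E → E} {y : X → E} (hG : ∀ x, IsStronglyMonotone m (G x))
    (hy : ∀ x, G x (y x) = 0) (hL : ∀ x x' u, ‖G x u - G x' u‖ ≤ L * ‖x - x'‖) (x x' : X) :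
    ‖y x - y x'‖ ≤ L / m * ‖x - x'‖ := by
  rw [div_mul_eq_mul_div, le_div_iff₀' hm]
  calc m * ‖y x - y x'‖ ≤ ‖G x' (y x) - G x' (y x')‖ := (hG x').mul_norm_sub_le _ _
    _ = ‖G x (y x) - G x' (y x)‖ := by rw [hy, hy, sub_zero, zero_sub, norm_neg]
    _ ≤ L * ‖x - x'‖ := hL x x' (y x)

end StronglyMonotone

lemma le_mul_sqrt_of_sq_add_sq_le {a b c d L : ℝ} (hL : 0 ≤ L)
    (h : a ^ 2 + b ^ 2 ≤ L ^ 2 * (c ^ 2 + d ^ 2)) : b ≤ L * √(c ^ 2 + d ^ 2) := by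
  rw [← Real.sqrt_sq hL, ← Real.sqrt_mul (sq_nonneg L)]
  exact Real.le_sqrt_of_sq_le (by nlinarith [sq_nonneg a])

lemma sqrt_sq_add_sq_le_of_abs_le_mul {a b k : ℝ} (ha : 0 ≤ a) (hk : 0 ≤ k) (hb : |b| ≤ k * a) :
    √(a ^ 2 + b ^ 2) ≤ (1 + k) * a := by
  rw [Real.sqrt_le_left (by positivity), ← sq_abs b]
  nlinarith [abs_nonneg b]

theorem vstar_lipschitz_general {p q : ℕ}
    (σ LF1 Lf1 Lf2 rv Lv : ℝ)
    (hσ : 0 < σ) (hLF1 : 0 ≤ LF1) (hLf1 : 0 ≤ Lf1) (hLf2 : 0 ≤ Lf2)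
    (hLv : Lv = (LF1 + Lf2 * rv) * (1 + Lf1 / σ))
    (f : Vec p → Vec q → ℝ)
    (gF1 : Vec p → Vec q → Vec p) (gF2 : Vec p → Vec q → Vec q)
    (g1 : Vec p → Vec q → Vec p) (g2 : Vec p → Vec q → Vec q)
    (f22 : Vec p → Vec q → (Vec q →L[ℝ] Vec q))
    -- `gF1, gF2` are the partial gradients of `F`, `g1, g2` those of `f`
    (hg2 : ∀ x y, HasGradientAt (fun y' => f x y') (g2 x y) y)
    -- `f22 x y` is the Hessian of `f` w.r.t. the second block
    (hf22 : ∀ x y, HasFDerivAt (fun y' => g2 x y') (f22 x y) y)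
    -- `∇F` is `L_{F,1}`-Lipschitz
    (hgFlip : ∀ x y x' y',
      ‖gF1 x y - gF1 x' y'‖ ^ 2 + ‖gF2 x y - gF2 x' y'‖ ^ 2
        ≤ LF1 ^ 2 * (‖x - x'‖ ^ 2 + ‖y - y'‖ ^ 2))
    -- `∇f` is `L_{f,1}`-Lipschitz
    (hglip : ∀ x y x' y',
      ‖g1 x y - g1 x' y'‖ ^ 2 + ‖g2 x y - g2 x' y'‖ ^ 2
        ≤ Lf1 ^ 2 * (‖x - x'‖ ^ 2 + ‖y - y'‖ ^ 2))
    -- `∇²f` is `L_{f,2}`-Lipschitz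
    (hf22lip : ∀ x y x' y',
      ‖f22 x y - f22 x' y'‖ ≤ Lf2 * Real.sqrt (‖x - x'‖ ^ 2 + ‖y - y'‖ ^ 2))
    -- `f(x, ·)` is `σ`-strongly convex for every `x`
    (hsc : ∀ x, ConvexOn ℝ Set.univ (fun y : Vec q => f x y - σ / 2 * ‖y‖ ^ 2))
    -- `y*` satisfies `∇₂f(x, y*(x)) = 0` for all `x`
    (ystar : Vec p → Vec q) (hystar : ∀ x, g2 x (ystar x) = 0)
    -- `v*` solves `∇²₂₂f(x, y*(x)) v*(x) = ∇₂F(x, y*(x))` and `‖v*(x)‖ ≤ r_v`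
    (vstar : Vec p → Vec q)
    (hvstar : ∀ x, (f22 x (ystar x)) (vstar x) = gF2 x (ystar x))
    (hvstar_norm : ∀ x, ‖vstar x‖ ≤ rv) :
    ∀ x x', ‖vstar x - vstar x'‖ ≤ Lv / σ * ‖x - x'‖ := by
  intro x x'
  have hmono (x) : IsStronglyMonotone σ (g2 x) :=
    (strongConvexOn_iff_convex.mpr (hsc x)).isStronglyMonotone (hg2 x)
  have hg2lip (x x' u) : ‖g2 x u - g2 x' u‖ ≤ Lf1 * ‖x - x'‖ := by
    simpa using le_mul_sqrt_of_sq_add_sq_le hLf1 (hglip x u x' u)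
  have hy := norm_sub_le_of_isStronglyMonotone_of_eq_zero hσ hmono hystar hg2lip x x'
  set s := √(‖x - x'‖ ^ 2 + ‖ystar x - ystar x'‖ ^ 2)
  have hs : s ≤ (1 + Lf1 / σ) * ‖x - x'‖ :=
    sqrt_sq_add_sq_le_of_abs_le_mul (norm_nonneg _) (by positivity) (by rwa [abs_norm])
  have hgF2 : ‖gF2 x (ystar x) - gF2 x' (ystar x')‖ ≤ LF1 * s :=
    le_mul_sqrt_of_sq_add_sq_le hLF1 (hgFlip x (ystar x) x' (ystar x'))
  have hrv : 0 ≤ rv := (norm_nonneg _).trans (hvstar_norm x)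
  have hv := ((hmono x).hasFDerivAt (hf22 x (ystar x))).mul_norm_sub_le_of_apply_eq
    (hvstar x) (hvstar x')
  rw [div_mul_eq_mul_div, le_div_iff₀' hσ]
  calc σ * ‖vstar x - vstar x'‖
      ≤ ‖gF2 x (ystar x) - gF2 x' (ystar x')‖
        + ‖f22 x (ystar x) - f22 x' (ystar x')‖ * ‖vstar x'‖ := hv
    _ ≤ LF1 * s + Lf2 * s * rv := by
      gcongr
      exacts [hf22lip _ _ _ _, hvstar_norm x']
    _ = (LF1 + Lf2 * rv) * s := by ring
    _ ≤ (LF1 + Lf2 * rv) * ((1 + Lf1 / σ) * ‖x - x'‖) :=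
      mul_le_mul_of_nonneg_left hs (add_nonneg hLF1 (mul_nonneg hLf2 hrv))
    _ = Lv * ‖x - x'‖ := by rw [hLv]; ring

/-- Lipschitz continuity of `v*(x) = [∇²₂₂f(x, y*(x))]⁻¹ ∇₂F(x, y*(x))`:
under the stated assumptions (with `r_v = L_{F,0}/σ` and
`L_v = (L_{F,1} + L_{f,2} r_v)(1 + L_{f,1}/σ)`), if `‖v*(x)‖ ≤ r_v` for all `x`, then
`‖v*(x) − v*(x')‖ ≤ (L_v/σ) ‖x − x'‖`. Here `v*` is characterized by the linear system
`∇²₂₂f(x, y*(x)) v*(x) = ∇₂F(x, y*(x))` (the Hessian is invertible by strong convexity). -/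
theorem vstar_lipschitz {p q : ℕ}
    (σ LF0 LF1 Lf1 Lf2 rv Lv : ℝ)
    (hσ : 0 < σ) (hLF0 : 0 ≤ LF0) (hLF1 : 0 ≤ LF1) (hLf1 : 0 ≤ Lf1) (hLf2 : 0 ≤ Lf2)
    (hrv : rv = LF0 / σ)
    (hLv : Lv = (LF1 + Lf2 * rv) * (1 + Lf1 / σ))
    (F f : Vec p → Vec q → ℝ)
    (gF1 : Vec p → Vec q → Vec p) (gF2 : Vec p → Vec q → Vec q)
    (g1 : Vec p → Vec q → Vec p) (g2 : Vec p → Vec q → Vec q)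
    (f22 : Vec p → Vec q → (Vec q →L[ℝ] Vec q))
    -- `gF1, gF2` are the partial gradients of `F`, `g1, g2` those of `f`
    (hgF1 : ∀ x y, HasGradientAt (fun x' => F x' y) (gF1 x y) x)
    (hgF2 : ∀ x y, HasGradientAt (fun y' => F x y') (gF2 x y) y)
    (hg1 : ∀ x y, HasGradientAt (fun x' => f x' y) (g1 x y) x)
    (hg2 : ∀ x y, HasGradientAt (fun y' => f x y') (g2 x y) y)
    -- `f22 x y` is the Hessian of `f` w.r.t. the second block
    (hf22 : ∀ x y, HasFDerivAt (fun y' => g2 x y') (f22 x y) y)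
    -- `F` is `L_{F,0}`-Lipschitz
    (hFlip : ∀ x y x' y',
      |F x y - F x' y'| ≤ LF0 * Real.sqrt (‖x - x'‖ ^ 2 + ‖y - y'‖ ^ 2))
    -- `∇F` is `L_{F,1}`-Lipschitz
    (hgFlip : ∀ x y x' y',
      ‖gF1 x y - gF1 x' y'‖ ^ 2 + ‖gF2 x y - gF2 x' y'‖ ^ 2
        ≤ LF1 ^ 2 * (‖x - x'‖ ^ 2 + ‖y - y'‖ ^ 2))
    -- `∇f` is `L_{f,1}`-Lipschitz
    (hglip : ∀ x y x' y',
      ‖g1 x y - g1 x' y'‖ ^ 2 + ‖g2 x y - g2 x' y'‖ ^ 2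
        ≤ Lf1 ^ 2 * (‖x - x'‖ ^ 2 + ‖y - y'‖ ^ 2))
    -- `∇²f` is `L_{f,2}`-Lipschitz
    (hf22lip : ∀ x y x' y',
      ‖f22 x y - f22 x' y'‖ ≤ Lf2 * Real.sqrt (‖x - x'‖ ^ 2 + ‖y - y'‖ ^ 2))
    -- `f(x, ·)` is `σ`-strongly convex for every `x`
    (hsc : ∀ x, ConvexOn ℝ Set.univ (fun y : Vec q => f x y - σ / 2 * ‖y‖ ^ 2))
    -- `y*` satisfies `∇₂f(x, y*(x)) = 0` for all `x`
    (ystar : Vec p → Vec q) (hystar : ∀ x, g2 x (ystar x) = 0)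
    -- `v*` solves `∇²₂₂f(x, y*(x)) v*(x) = ∇₂F(x, y*(x))` and `‖v*(x)‖ ≤ r_v`
    (vstar : Vec p → Vec q)
    (hvstar : ∀ x, (f22 x (ystar x)) (vstar x) = gF2 x (ystar x))
    (hvstar_norm : ∀ x, ‖vstar x‖ ≤ rv) :
    ∀ x x', ‖vstar x - vstar x'‖ ≤ Lv / σ * ‖x - x'‖ :=
  vstar_lipschitz_general σ LF1 Lf1 Lf2 rv Lv hσ hLF1 hLf1 hLf2 hLv f gF1 gF2 g1 g2 f22 hg2 hf22
    hgFlip hglip hf22lip hsc ystar hystar vstar hvstar hvstar_norm
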